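/- Let (w_n)_{n∈ℤ} and (v_n)_{n∈ℤ} be sequences of complex numbers with |w_n| = |v_n| = 1 for all n, let (d_n)_{n∈ℤ} be a bounded sequence of complex numbers with XT₁ ≠ T₀X, and let T = T(w_n, v_n, d_n) be the associated bounded block-shift operator on H ⊕ H. Suppose there exist a bijection g : ℤ → ℤ and N ∈ ℤ such that the numbers |d_{n+1}v_n − d_n w_n|², n > N, are pairwise distinct, and |d_{n+1}v_n − d_n w_n|² = |d_{g(n)+1}v_{g(n)} − d_{g(n)}w_{g(n)}|² for every n ∈ ℤ. If for every n ∈ ℤ at least one of the following holds, where c_n = conj(d_n)·conj(w_n)·v_n: (1) d_{n+1}c_n + d_n c_{n−1} − d_{n+1}·conj(w_n)·v_n·c_{n−1} is not a real number; (2) (conj(d_{n+1})·w_n·v_n − conj(d_n))·|d_n v_{n−1} − d_{n−1}w_{n−1}|² ≠ (conj(d_{n−1})·conj(w_{n−1})·v_{n−1} − conj(d_n))·|d_{n+1}v_n − d_n w_n|²; then T is irreducible. -/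

import Mathlib

noncomputable section

open Complex Metric

/-- `ℓ²(ℤ)` over `ℂ`. -/
abbrev Hl : Type := lp (fun _ : ℤ => ℂ) 2

/-- The standard orthonormal basis of `ℓ²(ℤ)`. -/
def eb (n : ℤ) : Hl := lp.single 2 n 1

/-- The Hilbert space direct sum `H ⊕ H`. -/
abbrev H2 : Type := WithLp 2 (Hl × Hl)

/-- A bounded operator on a Hilbert space is irreducible if the only closed subspaces
invariant under both it and its adjoint are `⊥` and `⊤`. -/
def IsIrreducibleOp {E : Type*} [NormedAddCommGroup E] [InnerProductSpace ℂ E] [CompleteSpace E]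
    (A : E →L[ℂ] E) : Prop :=
  ∀ K : Submodule ℂ E, IsClosed (K : Set E) →
    (∀ x ∈ K, A x ∈ K) → (∀ x ∈ K, ContinuousLinearMap.adjoint A x ∈ K) →
    K = ⊥ ∨ K = ⊤

/-- The block operator `(x, y) ↦ (T₀ x + (X T₁ − T₀ X) y, T₁ y)` on the Hilbert space
direct sum `H₀ ⊕ H₁`. -/
def blockT2 {H0 H1 : Type*} [NormedAddCommGroup H0] [NormedSpace ℂ H0]
    [NormedAddCommGroup H1] [NormedSpace ℂ H1]
    (T0 : H0 →L[ℂ] H0) (T1 : H1 →L[ℂ] H1) (X : H1 →L[ℂ] H0) :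
    WithLp 2 (H0 × H1) →L[ℂ] WithLp 2 (H0 × H1) :=
  let E := WithLp.prodContinuousLinearEquiv 2 ℂ H0 H1
  (E.symm.toContinuousLinearMap).comp
    ((((T0.comp (ContinuousLinearMap.fst ℂ H0 H1)) +
        ((X.comp T1 - T0.comp X).comp (ContinuousLinearMap.snd ℂ H0 H1))).prod
      (T1.comp (ContinuousLinearMap.snd ℂ H0 H1))).comp E.toContinuousLinearMap)

/-- The block operator `T(wₙ, vₙ, dₙ)` on `ℓ²(ℤ) ⊕ ℓ²(ℤ)`. -/
def blockT (T0 T1 X : Hl →L[ℂ] Hl) : H2 →L[ℂ] H2 := blockT2 T0 T1 X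
/-- `|d_{n+1} vₙ − dₙ wₙ|²`, the quantity determining the singular values of `Tₙ`. -/
def sqSeq (w v d : ℤ → ℂ) (n : ℤ) : ℝ := ‖d (n + 1) * v n - d n * w n‖ ^ 2

/-- `cₙ = conj(dₙ)·conj(wₙ)·vₙ`. -/
def cSeq' (w v d : ℤ → ℂ) (n : ℤ) : ℂ :=
  starRingEnd ℂ (d n) * starRingEnd ℂ (w n) * v n

/-!
Let `P` be the orthogonal projection onto a closed subspace reducing `T`, so `P` commutes with `T`.
Write `δₙ = d_{n+1} vₙ − dₙ wₙ`. In the basis `(eₙ, 0), (0, eₙ)` of `H ⊕ H`, `T` maps the plane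
`Vₙ` onto `Vₙ₊₁` by the invertible matrix `Sₙ = [[wₙ, δₙ], [0, vₙ]]`, so the `2 × 2` blocks
`B m n` of `P` satisfy `B (m+1) (n+1) * Sₙ = S_m * B m n` and `B n m = (B m n)ᴴ`. Consequently
`B m n` intertwines the Gram matrices `S_mᴴ S_m` and `Sₙᴴ Sₙ`, which are roots of
`λ² − (2 + |δ|²) λ + 1`; for distinct `m, n > N` these quadratics differ, so `B m n = 0`, and the
shift relation carries this to every off-diagonal block. At a point `n > N + 1` with
`δ_{n-1}, δₙ ≠ 0` the diagonal block commutes with `SₙᴴSₙ` and `S_{n-1}S_{n-1}ᴴ`, which forces it to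
be scalar, and the shift relation propagates the scalar along the diagonal. Thus `P` is a multiple
of the identity, hence `0` or `1`.
-/

open Matrix
open scoped InnerProductSpace

theorem eq_zero_of_mul_eq_mul_of_quadratic {𝕜 R : Type*} [Field 𝕜] [Ring R] [Algebra 𝕜 R]
    {A B C : R} {s t : 𝕜} (hst : s ≠ t) (hA : A * A = s • A - 1) (hC : C * C = t • C - 1)
    (h : A * B = B * C) : B = 0 := by
  have hAB : (s - t) • (A * B) = 0 := by
    have : A * A * B = B * (C * C) := by
      rw [mul_assoc, h, ← mul_assoc, h, mul_assoc]
    rw [hA, hC, sub_mul, mul_sub, smul_mul_assoc, mul_smul_comm, ← h] at this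
    rw [sub_smul, sub_eq_zero]
    simpa using this
  have hinv : (s • 1 - A) * A = 1 := by
    rw [sub_mul, smul_mul_assoc, one_mul, hA, sub_sub_cancel]
  rw [smul_eq_zero, sub_eq_zero] at hAB
  calc B = (s • 1 - A) * (A * B) := by rw [← mul_assoc, hinv, one_mul]
    _ = 0 := by rw [hAB.resolve_left hst, mul_zero]

theorem Matrix.eq_smul_one_of_commute_fin_two {K : Type*} [Field K] [StarRing K] {x y : K}
    (hx : x ≠ 0) (hy : y ≠ 0) (hxy : x + y ≠ 0) {B : Matrix (Fin 2) (Fin 2) K}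
    (h₁ : Commute B !![0, x; star x, star x * x]) (h₂ : Commute B !![star y * y, y; star y, 0]) :
    B = B 0 0 • 1 := by
  have h00 := congrFun₂ h₁.eq 0 0
  have h01 := congrFun₂ h₁.eq 0 1
  have h01' := congrFun₂ h₂.eq 0 1
  simp only [mul_apply, Fin.sum_univ_two, cons_val', cons_val_zero, cons_val_one, of_apply,
    empty_val', cons_val_fin_one, zero_mul, mul_zero, zero_add, add_zero] at h00 h01 h01'
  have hb : B 0 1 = 0 := by
    have : x * y * (B 0 1 * star (x + y)) = 0 := by
      rw [star_add]
      linear_combination y * h01 - x * h01'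
    simpa [hx, hy, ← star_add, hxy] using this
  have hc : B 1 1 = B 0 0 := by
    rw [hb, zero_mul, add_zero] at h01
    exact (mul_right_cancel₀ hx (h01.trans (mul_comm _ _))).symm
  have hb' : B 1 0 = 0 := by
    rw [hb, zero_mul] at h00
    simpa [hx] using h00.symm
  ext i j
  fin_cases i <;> fin_cases j <;> simp [hb, hb', hc]

theorem Matrix.one_add_mul_self_fin_two {K : Type*} [CommRing K] [Star K] (x : K) :
    (1 + !![0, x; star x, star x * x]) * (1 + !![0, x; star x, star x * x]) =
      (2 + star x * x) • (1 + !![0, x; star x, star x * x]) - 1 := by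
  ext i j
  fin_cases i <;> fin_cases j <;> simp [mul_apply, Fin.sum_univ_two, one_apply] <;> ring

def IsShiftIntertwiner {R : Type*} [Mul R] (S : ℤ → R) (B : ℤ → ℤ → R) : Prop :=
  ∀ m n, B (m + 1) (n + 1) * S n = S m * B m n

namespace IsShiftIntertwiner

variable {R : Type*} {S : ℤ → R} {B : ℤ → ℤ → R}

section Star

variable [Monoid R] [StarMul R] (hR : IsShiftIntertwiner S B) (hH : ∀ m n, B n m = star (B m n))
include hR hH

theorem star_mul (m n : ℤ) : star (S m) * B (m + 1) (n + 1) = B m n * star (S n) := by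
  simpa [StarMul.star_mul, ← hH] using congrArg star (hR n m)

theorem star_mul_self_mul (m n : ℤ) :
    star (S m) * S m * B m n = B m n * (star (S n) * S n) := by
  rw [mul_assoc, ← hR, ← mul_assoc, hR.star_mul hH, mul_assoc]

theorem mul_star_self_mul (m n : ℤ) :
    S m * star (S m) * B (m + 1) (n + 1) = B (m + 1) (n + 1) * (S n * star (S n)) := by
  rw [mul_assoc, hR.star_mul hH, ← mul_assoc, ← hR, mul_assoc]

end Star

section Zero

variable [MonoidWithZero R] (hR : IsShiftIntertwiner S B) (hS : ∀ n, IsUnit (S n))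
include hR hS

theorem succ_eq_zero_iff (m n : ℤ) : B (m + 1) (n + 1) = 0 ↔ B m n = 0 := by
  rw [← (hS n).mul_left_eq_zero, hR, (hS m).mul_right_eq_zero]

theorem add_eq_zero_iff (m n j : ℤ) : B (m + j) (n + j) = 0 ↔ B m n = 0 := by
  induction j using Int.induction_on with
  | zero => simp
  | succ i ih => rw [← add_assoc, ← add_assoc, hR.succ_eq_zero_iff hS, ih]
  | pred i ih =>
    rw [← ih, ← hR.succ_eq_zero_iff hS]
    ring_nf

end Zero

theorem diag_eq [Monoid R] (hR : IsShiftIntertwiner S B) (hS : ∀ n, IsUnit (S n)) {c : R}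
    (hc : ∀ n, Commute c (S n)) {n₀ : ℤ} (h : B n₀ n₀ = c) (n : ℤ) : B n n = c := by
  have step : ∀ n, B (n + 1) (n + 1) = c ↔ B n n = c := fun n => by
    rw [← (hS n).mul_left_inj, hR, (hc n).eq, (hS n).mul_right_inj]
  induction n using Int.inductionOn' (b := n₀) with
  | zero => exact h
  | succ k _ ih => exact (step k).2 ih
  | pred k _ ih => exact (step (k - 1)).1 (by rwa [sub_add_cancel])

end IsShiftIntertwiner

def shiftBlock (w v δ : ℤ → ℂ) (n : ℤ) : Matrix (Fin 2) (Fin 2) ℂ := !![w n, δ n; 0, v n]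

section ShiftBlock

variable {w v δ : ℤ → ℂ} {n : ℤ}

theorem star_shiftBlock_mul_self (hw : ‖w n‖ = 1) (hv : ‖v n‖ = 1) :
    star (shiftBlock w v δ n) * shiftBlock w v δ n =
      1 + !![0, star (w n) * δ n; star (star (w n) * δ n),
        star (star (w n) * δ n) * (star (w n) * δ n)] := by
  have hw' : starRingEnd ℂ (w n) * w n = 1 := by simp [Complex.conj_mul', hw]
  have hv' : starRingEnd ℂ (v n) * v n = 1 := by simp [Complex.conj_mul', hv]
  ext i j
  fin_cases i <;> fin_cases j <;>
    simp [shiftBlock, mul_apply, Fin.sum_univ_two, star_eq_conjTranspose] <;>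
    first
    | ring1
    | linear_combination hw'
    | linear_combination hv' - starRingEnd ℂ (δ n) * δ n * hw'

theorem shiftBlock_mul_star_self (hw : ‖w n‖ = 1) (hv : ‖v n‖ = 1) :
    shiftBlock w v δ n * star (shiftBlock w v δ n) =
      1 + !![star (δ n * star (v n)) * (δ n * star (v n)), δ n * star (v n);
        star (δ n * star (v n)), 0] := by
  have hw' : w n * starRingEnd ℂ (w n) = 1 := by simp [Complex.mul_conj', hw]
  have hv' : v n * starRingEnd ℂ (v n) = 1 := by simp [Complex.mul_conj', hv]
  ext i j
  fin_cases i <;> fin_cases j <;>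
    simp [shiftBlock, mul_apply, Fin.sum_univ_two, star_eq_conjTranspose] <;>
    first
    | ring1
    | linear_combination hv'
    | linear_combination hw' - δ n * starRingEnd ℂ (δ n) * hv'

theorem isUnit_shiftBlock (hw : ‖w n‖ = 1) (hv : ‖v n‖ = 1) : IsUnit (shiftBlock w v δ n) := by
  rw [isUnit_iff_isUnit_det, shiftBlock, det_fin_two_of]
  simp [← norm_ne_zero_iff, hw, hv]

end ShiftBlock

theorem Set.InjOn.exists_sub_one_ne_and_ne {α : Type*} {f : ℤ → α} {N : ℤ}
    (hf : Set.InjOn f (Set.Ioi N)) (a : α) : ∃ n, N < n - 1 ∧ f (n - 1) ≠ a ∧ f n ≠ a := by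
  by_contra! h
  have hit : ∀ k, N < k → ∃ p, k ≤ p ∧ p ≤ k + 1 ∧ f p = a := fun k hk => by
    by_cases hk' : f k = a
    · exact ⟨k, le_rfl, by omega, hk'⟩
    · exact ⟨k + 1, by omega, le_rfl, h (k + 1) (by omega) (by simpa using hk')⟩
  obtain ⟨p, hp₁, hp₂, hpa⟩ := hit (N + 1) (by omega)
  obtain ⟨q, hq₁, hq₂, hqa⟩ := hit (N + 3) (by omega)
  have := hf (show p ∈ Set.Ioi N from Set.mem_Ioi.2 (by omega))
    (show q ∈ Set.Ioi N from Set.mem_Ioi.2 (by omega)) (hpa.trans hqa.symm)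
  omega

namespace IsShiftIntertwiner

variable {w v δ : ℤ → ℂ} {N : ℤ} (hw : ∀ n, ‖w n‖ = 1) (hv : ∀ n, ‖v n‖ = 1)
  (hδ : Set.InjOn (fun n => ‖δ n‖ ^ 2) (Set.Ioi N)) {B : ℤ → ℤ → Matrix (Fin 2) (Fin 2) ℂ}
  (hR : IsShiftIntertwiner (shiftBlock w v δ) B) (hH : ∀ m n, B n m = star (B m n))
include hw hv hδ hR hH

theorem eq_zero_of_ne {m n : ℤ} (hmn : m ≠ n) : B m n = 0 := by
  obtain ⟨j, hm, hn⟩ : ∃ j, N < m + j ∧ N < n + j := ⟨N + 1 - min m n, by omega, by omega⟩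
  rw [← hR.add_eq_zero_iff (fun n => isUnit_shiftBlock (hw n) (hv n)) m n j]
  have key := hR.star_mul_self_mul hH (m + j) (n + j)
  rw [star_shiftBlock_mul_self (hw _) (hv _), star_shiftBlock_mul_self (hw _) (hv _)] at key
  refine eq_zero_of_mul_eq_mul_of_quadratic (fun h => hmn ?_) (one_add_mul_self_fin_two _)
    (one_add_mul_self_fin_two _) key
  have h' : ‖star (w (m + j)) * δ (m + j)‖ ^ 2 = ‖star (w (n + j)) * δ (n + j)‖ ^ 2 := by
    have := add_left_cancel h
    simp only [Complex.star_def, Complex.conj_mul'] at this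
    exact_mod_cast this
  simp only [norm_mul, norm_star, hw, one_mul] at h'
  simpa using hδ hm hn h'

theorem exists_diag_eq_smul_one : ∃ n₀ : ℤ, B n₀ n₀ = B n₀ n₀ 0 0 • 1 := by
  obtain ⟨n₀, hn₀, hδ₁, hδ₀⟩ := hδ.exists_sub_one_ne_and_ne 0
  have h₁ : Commute (B n₀ n₀) (star (shiftBlock w v δ n₀) * shiftBlock w v δ n₀) :=
    (hR.star_mul_self_mul hH n₀ n₀).symm
  have h₂ : Commute (B n₀ n₀) (shiftBlock w v δ (n₀ - 1) * star (shiftBlock w v δ (n₀ - 1))) := by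
    have := hR.mul_star_self_mul hH (n₀ - 1) (n₀ - 1)
    rw [sub_add_cancel] at this
    exact this.symm
  rw [star_shiftBlock_mul_self (hw _) (hv _)] at h₁
  rw [shiftBlock_mul_star_self (hw _) (hv _)] at h₂
  have hx : star (w n₀) * δ n₀ ≠ 0 := by
    rw [← norm_ne_zero_iff, norm_mul, norm_star, hw, one_mul]
    simpa using hδ₀
  have hy : δ (n₀ - 1) * star (v (n₀ - 1)) ≠ 0 := by
    rw [← norm_ne_zero_iff, norm_mul, norm_star, hv, mul_one]
    simpa using hδ₁
  have hxy : star (w n₀) * δ n₀ + δ (n₀ - 1) * star (v (n₀ - 1)) ≠ 0 := fun h => by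
    have h' := congrArg norm (eq_neg_of_add_eq_zero_left h)
    rw [norm_neg, norm_mul, norm_star, hw, one_mul, norm_mul, norm_star, hv, mul_one] at h'
    have := hδ (Set.mem_Ioi.2 (by omega)) (Set.mem_Ioi.2 hn₀) (congrArg (· ^ 2) h')
    omega
  exact ⟨n₀, eq_smul_one_of_commute_fin_two hx hy hxy
    (by simpa only [add_sub_cancel_left] using h₁.sub_right (Commute.one_right _))
    (by simpa only [add_sub_cancel_left] using h₂.sub_right (Commute.one_right _))⟩

theorem exists_eq_ite_smul_one :
    ∃ c : ℂ, ∀ m n, B m n = if m = n then c • 1 else 0 := by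
  obtain ⟨n₀, hn₀⟩ := hR.exists_diag_eq_smul_one hw hv hδ hH
  refine ⟨B n₀ n₀ 0 0, fun m n => ?_⟩
  split_ifs with hmn
  · subst hmn
    exact hR.diag_eq (fun n => isUnit_shiftBlock (hw n) (hv n))
      (fun n => (Commute.one_left _).smul_left _) hn₀ m
  · exact hR.eq_zero_of_ne hw hv hδ hH hmn

end IsShiftIntertwiner

section Projection

variable {𝕜 E : Type*} [RCLike 𝕜] [NormedAddCommGroup E] [InnerProductSpace 𝕜 E]
  (K : Submodule 𝕜 E) [K.HasOrthogonalProjection]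

theorem Submodule.commute_starProjection [CompleteSpace E] {A : E →L[𝕜] E}
    (hA : ∀ x ∈ K, A x ∈ K) (hA' : ∀ x ∈ K, ContinuousLinearMap.adjoint A x ∈ K) :
    Commute K.starProjection A := by
  rw [ContinuousLinearMap.IsIdempotentElem.commute_iff K.isIdempotentElem_starProjection,
    range_starProjection, ker_starProjection, Module.End.mem_invtSubmodule_iff_forall_mem_of_mem]
  refine ⟨hA, ContinuousLinearMap.orthogonal_mem_invtSubmodule ?_⟩
  exact (Module.End.mem_invtSubmodule_iff_forall_mem_of_mem _).2 hA'

theorem Submodule.eq_bot_or_eq_top_of_starProjection_eq_smul {c : 𝕜}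
    (h : K.starProjection = c • 1) : K = ⊥ ∨ K = ⊤ := by
  by_cases hc : c = 0
  · refine Or.inl ((Submodule.eq_bot_iff K).2 fun x hx => ?_)
    simpa [h, hc, eq_comm] using K.starProjection_eq_self_iff.2 hx
  · refine Or.inr (Submodule.eq_top_iff'.2 fun x => ?_)
    simpa [h, smul_smul, hc] using K.starProjection_apply_mem (c⁻¹ • x)

end Projection

def eb2 : Fin 2 → ℤ → H2
  | 0, n => WithLp.toLp 2 (eb n, 0)
  | 1, n => WithLp.toLp 2 (0, eb n)

theorem inner_eb_left (m : ℤ) (f : Hl) : ⟪eb m, f⟫_ℂ = f m := by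
  simp [eb, lp.inner_single_left]

theorem inner_eb2_zero_left (m : ℤ) (z : H2) : ⟪eb2 0 m, z⟫_ℂ = z.fst m := by
  simp [eb2, WithLp.prod_inner_apply, inner_eb_left]

theorem inner_eb2_one_left (m : ℤ) (z : H2) : ⟪eb2 1 m, z⟫_ℂ = z.snd m := by
  simp [eb2, WithLp.prod_inner_apply, inner_eb_left]

theorem inner_eb2_eb2 (i j : Fin 2) (m n : ℤ) :
    ⟪eb2 i m, eb2 j n⟫_ℂ = if i = j ∧ m = n then 1 else 0 := by
  fin_cases i <;> fin_cases j <;>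
    simp only [Fin.zero_eta, Fin.mk_one, inner_eb2_zero_left, inner_eb2_one_left] <;>
    simp [eb2, eb, lp.single_apply, Pi.single_apply]

theorem H2.ext_inner_eb2 {z y : H2} (h : ∀ i m, ⟪eb2 i m, z⟫_ℂ = ⟪eb2 i m, y⟫_ℂ) : z = y := by
  refine (WithLp.ext_iff 2).2 (Prod.ext (lp.ext (funext fun m => ?_)) (lp.ext (funext fun m => ?_)))
  · simpa only [inner_eb2_zero_left, WithLp.ofLp_fst] using h 0 m
  · simpa only [inner_eb2_one_left, WithLp.ofLp_snd] using h 1 m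

def cornerWeight (w v d : ℤ → ℂ) (n : ℤ) : ℂ := d (n + 1) * v n - d n * w n

theorem blockT_apply (T0 T1 X : Hl →L[ℂ] Hl) (z : H2) :
    blockT T0 T1 X z = WithLp.toLp 2 (T0 z.fst + (X (T1 z.snd) - T0 (X z.snd)), T1 z.snd) := rfl

theorem blockT_eb2 {w v d : ℤ → ℂ} {T0 T1 X : Hl →L[ℂ] Hl}
    (hT0 : ∀ n : ℤ, T0 (eb n) = w n • eb (n + 1)) (hT1 : ∀ n : ℤ, T1 (eb n) = v n • eb (n + 1))
    (hX : ∀ n : ℤ, X (eb n) = d n • eb n) (j : Fin 2) (n : ℤ) :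
    blockT T0 T1 X (eb2 j n) = ∑ i, shiftBlock w v (cornerWeight w v d) n i j • eb2 i (n + 1) := by
  fin_cases j <;>
    simp [blockT_apply, eb2, hT0, hT1, hX, shiftBlock, cornerWeight, ← WithLp.toLp_smul, sub_smul,
      smul_smul, mul_comm, ← WithLp.toLp_sub, ← WithLp.toLp_add]

def blockEntry (P : H2 →L[ℂ] H2) (m n : ℤ) : Matrix (Fin 2) (Fin 2) ℂ :=
  Matrix.of fun i j => ⟪eb2 i m, P (eb2 j n)⟫_ℂ

section Blocks

variable {A P : H2 →L[ℂ] H2} {S : ℤ → Matrix (Fin 2) (Fin 2) ℂ}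

theorem adjoint_eb2 (hS : ∀ j n, A (eb2 j n) = ∑ i, S n i j • eb2 i (n + 1)) (i : Fin 2) (m : ℤ) :
    ContinuousLinearMap.adjoint A (eb2 i (m + 1)) = ∑ k, star (S m i k) • eb2 k m := by
  refine H2.ext_inner_eb2 fun l p => ?_
  rw [ContinuousLinearMap.adjoint_inner_right, hS, sum_inner, inner_sum]
  simp only [inner_smul_left, inner_smul_right, inner_eb2_eb2]
  by_cases hpm : p = m
  · subst hpm
    simp
  · simp [hpm]

theorem isShiftIntertwiner_blockEntry (hPA : Commute P A)
    (hS : ∀ j n, A (eb2 j n) = ∑ i, S n i j • eb2 i (n + 1)) :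
    IsShiftIntertwiner S (blockEntry P) := by
  intro m n
  ext i j
  have hP : ⟪eb2 i (m + 1), P (A (eb2 j n))⟫_ℂ = ⟪eb2 i (m + 1), A (P (eb2 j n))⟫_ℂ :=
    congrArg _ (DFunLike.congr_fun hPA.eq (eb2 j n))
  rw [← ContinuousLinearMap.adjoint_inner_left A, adjoint_eb2 hS, hS] at hP
  simpa [blockEntry, mul_apply, inner_sum, sum_inner, inner_smul_left, inner_smul_right,
    inner_add_left, mul_comm, -WithLp.prod_inner_apply] using hP

theorem blockEntry_swap (hP : IsSelfAdjoint P) (m n : ℤ) :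
    blockEntry P n m = star (blockEntry P m n) := by
  ext i j
  rw [star_apply, blockEntry, blockEntry, of_apply, of_apply,
    ← ContinuousLinearMap.adjoint_inner_left, hP.adjoint_eq]
  exact (inner_conj_symm _ _).symm

theorem eq_smul_one_of_blockEntry (hP : IsSelfAdjoint P) {c : ℂ}
    (h : ∀ m n, blockEntry P m n = if m = n then c • 1 else 0) : P = star c • 1 := by
  have hPe : ∀ i m, P (eb2 i m) = c • eb2 i m := fun i m => H2.ext_inner_eb2 fun k p => by
    have := congrFun₂ (h p m) k i
    rw [inner_smul_right, inner_eb2_eb2]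
    by_cases hpm : p = m
    · subst hpm
      simpa [blockEntry, one_apply] using this
    · simpa [blockEntry, hpm] using this
  ext1 z
  refine H2.ext_inner_eb2 fun i m => ?_
  rw [← ContinuousLinearMap.adjoint_inner_left, hP.adjoint_eq, hPe]
  simp [inner_smul_left]

end Blocks

theorem irreducibility_of_T_w_v_d_general
    (w v : ℤ → ℂ) (hw : ∀ n, ‖w n‖ = 1) (hv : ∀ n, ‖v n‖ = 1)
    (d : ℤ → ℂ)
    (T0 T1 X : Hl →L[ℂ] Hl)
    (hT0 : ∀ n : ℤ, T0 (eb n) = w n • eb (n + 1))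
    (hT1 : ∀ n : ℤ, T1 (eb n) = v n • eb (n + 1))
    (hX : ∀ n : ℤ, X (eb n) = d n • eb n)
    (hg : ∃ g : ℤ ≃ ℤ, ∃ N : ℤ,
      (∀ m n : ℤ, N < m → N < n → sqSeq w v d m = sqSeq w v d n → m = n) ∧
      (∀ n : ℤ, sqSeq w v d n = sqSeq w v d (g n))) :
    IsIrreducibleOp (blockT T0 T1 X) := by
  obtain ⟨-, N, hinj, -⟩ := hg
  intro K hK hKT hKT'
  have : CompleteSpace K := hK.completeSpace_coe
  have hP := isSelfAdjoint_starProjection K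
  have hR : IsShiftIntertwiner (shiftBlock w v (cornerWeight w v d))
      (blockEntry K.starProjection) :=
    isShiftIntertwiner_blockEntry (K.commute_starProjection hKT hKT') (blockT_eb2 hT0 hT1 hX)
  obtain ⟨c, hc⟩ := hR.exists_eq_ite_smul_one hw hv (fun m hm n hn h => hinj m n hm hn h)
    (blockEntry_swap hP)
  exact K.eq_bot_or_eq_top_of_starProjection_eq_smul (eq_smul_one_of_blockEntry hP hc)

/-- Theorem 3.7: irreducibility of `T(wₙ, vₙ, dₙ)` with unimodular weights. -/
theorem irreducibility_of_T_w_v_d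
    (w v : ℤ → ℂ) (hw : ∀ n, ‖w n‖ = 1) (hv : ∀ n, ‖v n‖ = 1)
    (d : ℤ → ℂ) (hdb : ∃ C : ℝ, ∀ n, ‖d n‖ ≤ C)
    (T0 T1 X : Hl →L[ℂ] Hl)
    (hT0 : ∀ n : ℤ, T0 (eb n) = w n • eb (n + 1))
    (hT1 : ∀ n : ℤ, T1 (eb n) = v n • eb (n + 1))
    (hX : ∀ n : ℤ, X (eb n) = d n • eb n)
    (hXT : X.comp T1 ≠ T0.comp X)
    (hg : ∃ g : ℤ ≃ ℤ, ∃ N : ℤ,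
      (∀ m n : ℤ, N < m → N < n → sqSeq w v d m = sqSeq w v d n → m = n) ∧
      (∀ n : ℤ, sqSeq w v d n = sqSeq w v d (g n)))
    (hcond : ∀ n : ℤ,
      (¬ ∃ r : ℝ, d (n + 1) * cSeq' w v d n + d n * cSeq' w v d (n - 1) -
          d (n + 1) * starRingEnd ℂ (w n) * v n * cSeq' w v d (n - 1) = (r : ℂ)) ∨
      (starRingEnd ℂ (d (n + 1)) * w n * v n - starRingEnd ℂ (d n)) *
          ((sqSeq w v d (n - 1) : ℝ) : ℂ) ≠
        (starRingEnd ℂ (d (n - 1)) * starRingEnd ℂ (w (n - 1)) * v (n - 1) -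
            starRingEnd ℂ (d n)) * ((sqSeq w v d n : ℝ) : ℂ)) :
    IsIrreducibleOp (blockT T0 T1 X) :=
  irreducibility_of_T_w_v_d_general w v hw hv d T0 T1 X hT0 hT1 hX hg
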